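/- Let R > 0, let l₂ > 0 with l₂ < πR, set α₂ := sin(l₂/(2R)), and let ν satisfy α₂ < ν ≤ 1. With h_±(x) := (1/ν)( −sin²[x/(2R)] ± cos[x/(2R)]√(ν² − sin²[x/(2R)]) ) and Δs* := 2R·arcsin ν, one has ∫₀^{Δs* − l₂} ( h₊(σ + l₂) − h₋(σ + l₂) ) dσ = πRν − 2H(α₂,ν), where H(α,ν) := R( (α/ν)√(ν² − α²) + ν arcsin(α/ν) ). -/

import Mathlib

open Real intervalIntegral

/-- `h₊(x) = (1/ν)(−sin²[x/(2R)] + cos[x/(2R)] √(ν² − sin²[x/(2R)]))`. -/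
noncomputable def hPlus (R ν x : ℝ) : ℝ :=
  (1 / ν) * (-(sin (x / (2 * R))) ^ 2
    + cos (x / (2 * R)) * Real.sqrt (ν ^ 2 - (sin (x / (2 * R))) ^ 2))

/-- `h₋(x) = (1/ν)(−sin²[x/(2R)] − cos[x/(2R)] √(ν² − sin²[x/(2R)]))`. -/
noncomputable def hMinus (R ν x : ℝ) : ℝ :=
  (1 / ν) * (-(sin (x / (2 * R))) ^ 2
    - cos (x / (2 * R)) * Real.sqrt (ν ^ 2 - (sin (x / (2 * R))) ^ 2))

/-- `H(α,ν) = R((α/ν)√(ν² − α²) + ν arcsin(α/ν))`. -/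
noncomputable def Hfun (R α ν : ℝ) : ℝ :=
  R * ((α / ν) * Real.sqrt (ν ^ 2 - α ^ 2) + ν * arcsin (α / ν))

/-!
`h₊ − h₋ = (2/ν) cos(x/(2R)) √(ν² − sin²(x/(2R)))`, and `∂_α H(α,ν) = 2R √(ν² − α²)/ν`,
so by the chain rule `x ↦ 2 H(sin(x/(2R)), ν)` is an antiderivative of `h₊ − h₋` as long as
`|x| < 2R arcsin ν`. The fundamental theorem of calculus on `[l₂, 2R arcsin ν]` then gives
`2H(ν, ν) − 2H(α₂, ν) = πRν − 2H(α₂, ν)`.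
-/

lemma hPlus_sub_hMinus (R ν x : ℝ) :
    hPlus R ν x - hMinus R ν x =
      2 / ν * cos (x / (2 * R)) * Real.sqrt (ν ^ 2 - sin (x / (2 * R)) ^ 2) := by
  simp only [hPlus, hMinus]
  ring

lemma continuous_hPlus_sub_hMinus (R ν : ℝ) :
    Continuous fun x => hPlus R ν x - hMinus R ν x := by
  simp only [hPlus_sub_hMinus]
  fun_prop

lemma continuous_Hfun (R ν : ℝ) : Continuous fun α => Hfun R α ν := by
  unfold Hfun
  fun_prop

lemma Hfun_self (R : ℝ) {ν : ℝ} (hν : ν ≠ 0) : Hfun R ν ν = π * R * ν / 2 := by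
  simp only [Hfun, div_self hν, sub_self, Real.sqrt_zero, arcsin_one]
  ring

lemma hasDerivAt_Hfun (R : ℝ) {α ν : ℝ} (hν : 0 < ν) (hα : α ^ 2 < ν ^ 2) :
    HasDerivAt (fun α => Hfun R α ν) (2 * R * Real.sqrt (ν ^ 2 - α ^ 2) / ν) α := by
  have hd : 0 < ν ^ 2 - α ^ 2 := sub_pos.2 hα
  have hαν : |α / ν| < 1 := by
    rw [abs_div, abs_of_pos hν, div_lt_one hν]
    exact abs_lt_of_sq_lt_sq hα hν.le
  have hsqrt : HasDerivAt (fun α => Real.sqrt (ν ^ 2 - α ^ 2))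
      (-(2 * α) / (2 * Real.sqrt (ν ^ 2 - α ^ 2))) α := by
    simpa using ((hasDerivAt_pow 2 α).const_sub (ν ^ 2)).sqrt hd.ne'
  have harcsin : HasDerivAt (fun α => arcsin (α / ν))
      (1 / Real.sqrt (1 - (α / ν) ^ 2) * (1 / ν)) α :=
    (hasDerivAt_arcsin (abs_lt.1 hαν).1.ne' (abs_lt.1 hαν).2.ne).comp (h₂ := arcsin) α
      ((hasDerivAt_id' α).div_const ν)
  have hsqrt_one_sub : Real.sqrt (1 - (α / ν) ^ 2) = Real.sqrt (ν ^ 2 - α ^ 2) / ν := by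
    rw [show 1 - (α / ν) ^ 2 = (ν ^ 2 - α ^ 2) / ν ^ 2 by field_simp,
      Real.sqrt_div hd.le, Real.sqrt_sq hν.le]
  refine ((((hasDerivAt_id' α).div_const ν).mul hsqrt).add
    (harcsin.const_mul ν)).const_mul R |>.congr_deriv ?_
  rw [hsqrt_one_sub]
  field_simp
  linear_combination (-R) * Real.sq_sqrt hd.le

lemma hasDerivAt_two_mul_Hfun_sin {R ν x : ℝ} (hR : R ≠ 0) (hν : 0 < ν)
    (hx : sin (x / (2 * R)) ^ 2 < ν ^ 2) :
    HasDerivAt (fun x => 2 * Hfun R (sin (x / (2 * R))) ν) (hPlus R ν x - hMinus R ν x) x := by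
  have hinner : HasDerivAt (fun x => sin (x / (2 * R))) (cos (x / (2 * R)) * (1 / (2 * R))) x :=
    (hasDerivAt_sin _).comp x ((hasDerivAt_id x).div_const (2 * R))
  refine (((hasDerivAt_Hfun R hν hx).comp x hinner).const_mul 2).congr_deriv ?_
  rw [hPlus_sub_hMinus]
  field_simp

lemma sin_lt_of_abs_lt_arcsin {u ν : ℝ} (hu : |u| < arcsin ν) : sin u < ν := by
  have hπ : |u| < π / 2 := hu.trans_le (arcsin_le_pi_div_two ν)
  exact (lt_arcsin_iff_sin_lt' ⟨by linarith [neg_abs_le u], by linarith [le_abs_self u]⟩).1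
    ((le_abs_self u).trans_lt hu)

lemma sin_sq_lt_sq_of_abs_lt_arcsin {u ν : ℝ} (hu : |u| < arcsin ν) : sin u ^ 2 < ν ^ 2 := by
  have hneg : sin (-u) < ν := sin_lt_of_abs_lt_arcsin (by rwa [abs_neg])
  rw [sin_neg] at hneg
  exact sq_lt_sq' (by linarith) (sin_lt_of_abs_lt_arcsin hu)

theorem integral_hPlus_sub_hMinus {R ν a b : ℝ} (hR : 0 < R) (hab : a ≤ b)
    (ha : -(2 * R * arcsin ν) ≤ a) (hb : b ≤ 2 * R * arcsin ν) :
    ∫ x in a..b, (hPlus R ν x - hMinus R ν x) =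
      2 * Hfun R (sin (b / (2 * R))) ν - 2 * Hfun R (sin (a / (2 * R))) ν := by
  refine integral_eq_sub_of_hasDerivAt_of_le hab
    ((continuous_const.mul ((continuous_Hfun R ν).comp
      (continuous_sin.comp (continuous_id.div_const _)))).continuousOn)
    (fun x hx => ?_) ((continuous_hPlus_sub_hMinus R ν).intervalIntegrable a b)
  have hx' : |x / (2 * R)| < arcsin ν := by
    rw [abs_lt, lt_div_iff₀ (by positivity), div_lt_iff₀ (by positivity)]
    constructor <;> linarith [hx.1, hx.2]
  have hν : 0 < ν := arcsin_pos.1 ((abs_nonneg _).trans_lt hx')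
  exact hasDerivAt_two_mul_Hfun_sin hR.ne' hν (sin_sq_lt_sq_of_abs_lt_arcsin hx')

/-- For `0 < l₂ < πR`, `α₂ = sin(l₂/(2R))` and `α₂ < ν ≤ 1`, with
`Δs* = 2R arcsin ν`, one has
`∫₀^{Δs* − l₂} (h₊(σ + l₂) − h₋(σ + l₂)) dσ = πRν − 2H(α₂,ν)`. -/
theorem integral_h_shifted (R ν l₂ : ℝ) (hR : 0 < R)
    (hl₂ : 0 < l₂) (hl₂' : l₂ < π * R)
    (hν : sin (l₂ / (2 * R)) < ν) (hν1 : ν ≤ 1) :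
    ∫ σ in (0 : ℝ)..(2 * R * arcsin ν - l₂),
        (hPlus R ν (σ + l₂) - hMinus R ν (σ + l₂)) =
      π * R * ν - 2 * Hfun R (sin (l₂ / (2 * R))) ν := by
  have hθ₀ : 0 < l₂ / (2 * R) := by positivity
  have hθ : l₂ / (2 * R) < π / 2 := by
    rw [div_lt_div_iff₀ (by positivity) two_pos]; nlinarith
  have hν₀ : 0 < ν := (sin_pos_of_pos_of_lt_pi hθ₀ (by linarith [pi_pos])).trans hν
  have hθν : l₂ / (2 * R) < arcsin ν := (lt_arcsin_iff_sin_lt' ⟨by linarith, hθ⟩).2 hν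
  have hl₂_le : l₂ ≤ 2 * R * arcsin ν := by
    rw [div_lt_iff₀ (by positivity)] at hθν; linarith
  have hendpoint : sin (2 * R * arcsin ν / (2 * R)) = ν := by
    rw [mul_div_cancel_left₀ _ (by positivity), sin_arcsin (by linarith) hν1]
  rw [integral_comp_add_right (fun x => hPlus R ν x - hMinus R ν x), zero_add, sub_add_cancel,
    integral_hPlus_sub_hMinus hR hl₂_le (by linarith [arcsin_pos.2 hν₀]) le_rfl,
    hendpoint, Hfun_self R hν₀.ne']
  ring
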